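/- Let Y → P be the double cover above, E_0 = ψ^{-1}(E) with ψ*E = 2E_0, H = K_Y - E_0, and M = ψ*τ*(s + (3a-e-2)l). Then E_0|_{E_0} = -s - al and H|_{E_0} = (2a-e-2)l under the identification E_0 ≅ Σ_e, and H³ = 8a - 4e - 6. -/
import Mathlib


/-- The intersection pairing on `Pic(Σ_e) = ℤs ⊕ ℤl`: `s² = -e`, `s·l = 1`, `l² = 0`. -/
def hirzPair (e : ℤ) (D₁ D₂ : ℤ × ℤ) : ℤ :=
  -e * D₁.1 * D₂.1 + D₁.1 * D₂.2 + D₁.2 * D₂.1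

/-- For the double cover `Y → P` with `E₀ = ψ⁻¹(E)`, `H = K_Y - E₀`
and `M = ψ*τ*(s + (3a-e-2)l)` (so `K_Y = M + 2E₀` and `H = M + E₀`), under the
identification `E₀ ≅ Σ_e`: `E₀|_{E₀} = -s - al`, `H|_{E₀} = (2a-e-2)l`, and
`H³ = 8a - 4e - 6`. Here `res` is restriction of divisor classes to `E₀ ≅ Σ_e`,
`trip` is the triple intersection on `Y` (symmetric and trilinear), with
`D·D'·E₀ = (D|_{E₀})·(D'|_{E₀})` and `M³ = 0` since `M` is a pullback from a surface. -/
theorem stmt_7 (e a : ℤ)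
    (hpair : (3 ≤ e ∧ e ≤ a) ∨ (1 ≤ e ∧ e ≤ 2 ∧ e + 1 ≤ a) ∨ (e = 0 ∧ 2 ≤ a))
    (PicY : Type) [AddCommGroup PicY] (M E0 : PicY)
    (res : PicY →+ ℤ × ℤ)                  -- restriction to E₀ ≅ Σ_e
    (trip : PicY → PicY → PicY → ℤ)        -- triple intersection numbers on Y
    (htripAdd : ∀ D₁ D₂ D₃ D₃', trip D₁ D₂ (D₃ + D₃') = trip D₁ D₂ D₃ + trip D₁ D₂ D₃')
    (htripComm : ∀ D₁ D₂ D₃, trip D₁ D₂ D₃ = trip D₂ D₁ D₃)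
    (htripComm' : ∀ D₁ D₂ D₃, trip D₁ D₂ D₃ = trip D₁ D₃ D₂)
    (htripE0 : ∀ D₁ D₂, trip D₁ D₂ E0 = hirzPair e (res D₁) (res D₂))
    (hM3 : trip M M M = 0)                 -- M is a pullback of a divisor on Σ_e
    (hresM : res M = (1, 3 * a - e - 2))   -- M|_{E₀} = s + (3a-e-2)l
    -- adjunction on E₀ ≅ Σ_e: K_{E₀} = (K_Y + E₀)|_{E₀} = M|_{E₀} + 3·E₀|_{E₀}:
    (hadj : (3 : ℤ) • res E0 = ((-2, -(e + 2)) : ℤ × ℤ) - res M) :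
    res E0 = (-1, -a) ∧
    res (M + E0) = (0, 2 * a - e - 2) ∧
    trip (M + E0) (M + E0) (M + E0) = 8 * a - 4 * e - 6 := by
  rw [hresM] at hadj
  have hE0 : res E0 = (-1, -a) := by
    have h1 := congrArg Prod.fst hadj
    have h2 := congrArg Prod.snd hadj
    simp only [Prod.smul_fst, Prod.smul_snd, smul_eq_mul, Prod.fst_sub, Prod.snd_sub] at h1 h2
    rw [Prod.ext_iff]
    constructor <;> simp <;> omega
  refine ⟨hE0, ?_, ?_⟩
  · rw [map_add, hresM, hE0]
    simp only [Prod.mk_add_mk, Prod.mk.injEq]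
    constructor <;> ring
  · have addl : ∀ X Y : PicY, trip (M + E0) X Y = trip M X Y + trip E0 X Y := by
      intro X Y
      rw [htripComm (M + E0) X Y, htripComm' X (M + E0) Y, htripAdd,
          htripComm' X Y M, htripComm X M Y, htripComm' X Y E0, htripComm X E0 Y]
    have addm : ∀ X Y : PicY, trip X (M + E0) Y = trip X M Y + trip X E0 Y := by
      intro X Y
      rw [htripComm' X (M + E0) Y, htripAdd, htripComm' X Y M, htripComm' X Y E0]
    rw [addl, addm, addm, htripAdd, htripAdd, htripAdd, htripAdd]
    have hMME : trip M E0 M = trip M M E0 := by rw [htripComm' M E0 M]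
    have hEMM : trip E0 M M = trip M M E0 := by
      rw [htripComm E0 M M, htripComm' M E0 M]
    have hEME : trip E0 M E0 = trip M E0 E0 := by rw [htripComm E0 M E0]
    have hEEM : trip E0 E0 M = trip M E0 E0 := by
      rw [htripComm' E0 E0 M, htripComm E0 M E0]
    rw [hM3, hMME, hEMM, hEME, hEEM, htripE0 M M, htripE0 M E0, htripE0 E0 E0,
        hresM, hE0]
    simp only [hirzPair]
    ring
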